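/- Symmetrizability error lower bound: Let (W_t)_{t∈θ} be channels A → S(H) and suppose there is a map τ : A → P(θ) such that ∑_t τ(t∣a)W_t(a') = ∑_t τ(t∣a')W_t(a) for all a, a' ∈ A. Fix g* ∈ A and define the product distribution τ(t^n∣g*) = ∏_i τ(t_i∣g*). Then for every (n, J) code with stochastic encoder E and POVM {D_j} on H^{⊗n}, ∑_{t^n∈θ^n} τ(t^n∣g*)·[(1/J)∑_j ∑_{a^n} E(a^n∣j)tr(W_{t^n}(a^n)D_j)] = 1/J, provided additionally that ∑_{t} τ(t∣g*)W_t(a) = ∑_t τ(t∣g*)W_t(a') for all a, a' ∈ A (state-independence of the averaged channel). Consequently there exists t^n with average error probability at least 1 − 1/J. -/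
import Mathlib


open Matrix ComplexOrder

/-- The `n`-fold tensor product (in the natural product basis) of the outputs of a
classical-quantum channel `W`, at state sequence `t` and input sequence `a`. -/
noncomputable def tensorPow {d : ℕ} {θ A : Type*} (W : θ → A → Matrix (Fin d) (Fin d) ℂ)
    {n : ℕ} (t : Fin n → θ) (a : Fin n → A) :
    Matrix (Fin n → Fin d) (Fin n → Fin d) ℂ :=
  Matrix.of fun i j => ∏ k, W (t k) (a k) (i k) (j k)

theorem stmt10 {d : ℕ} {θ A : Type*} [Fintype θ] [Fintype A]
    (W : θ → A → Matrix (Fin d) (Fin d) ℂ)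
    (hWpsd : ∀ t a, (W t a).PosSemidef) (hWtr : ∀ t a, (W t a).trace = 1)
    (τ : A → θ → ℝ) (hτnn : ∀ a t, 0 ≤ τ a t) (hτ1 : ∀ a, ∑ t, τ a t = 1)
    -- symmetrizability: ∑_t τ(t∣a) W_t(a') = ∑_t τ(t∣a') W_t(a)
    (hsym : ∀ a a' : A, ∑ t, (τ a t : ℂ) • W t a' = ∑ t, (τ a' t : ℂ) • W t a)
    (g : A)
    -- the channel averaged with τ(·∣g*) does not depend on the input
    (hconst : ∀ a a' : A, ∑ t, (τ g t : ℂ) • W t a = ∑ t, (τ g t : ℂ) • W t a')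
    (n J : ℕ) (hJ : 0 < J)
    (E : Fin J → (Fin n → A) → ℝ) (hEnn : ∀ j a, 0 ≤ E j a) (hE1 : ∀ j, ∑ a, E j a = 1)
    (D : Fin J → Matrix (Fin n → Fin d) (Fin n → Fin d) ℂ)
    (hD : ∀ j, (D j).PosSemidef) (hDsum : ∑ j, D j = 1) :
    (∑ t : Fin n → θ, (∏ k, τ g (t k)) *
        ((1 / (J : ℝ)) * ∑ j, ∑ a : Fin n → A,
          E j a * ((tensorPow W t a * D j).trace).re) = 1 / (J : ℝ)) ∧
    ∃ t : Fin n → θ,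
      1 - 1 / (J : ℝ) ≤ 1 - (1 / (J : ℝ)) * ∑ j, ∑ a : Fin n → A,
          E j a * ((tensorPow W t a * D j).trace).re := by
  classical
  -- θ is nonempty
  have hθ : Nonempty θ := by
    by_contra h
    rw [not_nonempty_iff] at h
    have := hτ1 g
    simp [Finset.univ_eq_empty] at this
  -- the averaged channel output
  set M : Matrix (Fin d) (Fin d) ℂ := ∑ t, (τ g t : ℂ) • W t g with hM
  have hMtr : M.trace = 1 := by
    rw [hM, Matrix.trace_sum]
    simp only [Matrix.trace_smul, hWtr, smul_eq_mul, mul_one]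
    rw [← Complex.ofReal_sum, hτ1 g, Complex.ofReal_one]
  -- the n-fold tensor power of M
  set Mpow : Matrix (Fin n → Fin d) (Fin n → Fin d) ℂ :=
    Matrix.of fun i j => ∏ k, M (i k) (j k) with hMpow
  -- mixture identity
  have mix : ∀ a : Fin n → A,
      ∑ t : Fin n → θ, ((∏ k, τ g (t k) : ℝ) : ℂ) • tensorPow W t a = Mpow := by
    intro a
    ext i j
    simp only [Matrix.sum_apply, Matrix.smul_apply, tensorPow, Matrix.of_apply,
      smul_eq_mul, Complex.ofReal_prod, hMpow]
    have hMe : ∀ k : Fin n, M (i k) (j k) = ∑ s, (τ g s : ℂ) * W s (a k) (i k) (j k) := by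
      intro k
      rw [hM, ← hconst (a k) g]
      simp [Matrix.sum_apply]
    calc ∑ t : Fin n → θ, (∏ k, ((τ g (t k) : ℝ) : ℂ)) * ∏ k, W (t k) (a k) (i k) (j k)
        = ∑ t : Fin n → θ, ∏ k, (((τ g (t k) : ℝ) : ℂ) * W (t k) (a k) (i k) (j k)) := by
          simp [Finset.prod_mul_distrib]
      _ = ∏ k, ∑ s, (((τ g s : ℝ) : ℂ) * W s (a k) (i k) (j k)) :=
          (Fintype.prod_sum fun k s => ((τ g s : ℝ) : ℂ) * W s (a k) (i k) (j k)).symm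
      _ = ∏ k, M (i k) (j k) := by
          exact Finset.prod_congr rfl fun k _ => (hMe k).symm
  -- trace of Mpow
  have trMpow : Mpow.trace = 1 := by
    have : Mpow.trace = ∑ i : Fin n → Fin d, ∏ k, M (i k) (i k) := by
      simp [hMpow, Matrix.trace, Matrix.diag]
    rw [this, ← Fintype.prod_sum fun (k : Fin n) (r : Fin d) => M r r]
    have h2 : ∀ k ∈ Finset.univ (α := Fin n), (∑ r : Fin d, M r r) = 1 := fun _ _ => hMtr
    rw [Finset.prod_congr rfl h2, Finset.prod_const_one]
  -- key: mixture of success probabilities at fixed a, j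
  have key : ∀ (a : Fin n → A) (j : Fin J),
      ∑ t : Fin n → θ, (∏ k, τ g (t k)) * ((tensorPow W t a * D j).trace).re
        = ((Mpow * D j).trace).re := by
    intro a j
    have h1 : ∑ t : Fin n → θ, ((∏ k, τ g (t k) : ℝ) : ℂ) * (tensorPow W t a * D j).trace
        = (Mpow * D j).trace := by
      calc ∑ t : Fin n → θ, ((∏ k, τ g (t k) : ℝ) : ℂ) * (tensorPow W t a * D j).trace
          = ((∑ t : Fin n → θ, ((∏ k, τ g (t k) : ℝ) : ℂ) • tensorPow W t a) * D j).trace := by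
            rw [Matrix.sum_mul, Matrix.trace_sum]
            exact Finset.sum_congr rfl fun t _ => by
              rw [Matrix.smul_mul, Matrix.trace_smul, smul_eq_mul]
        _ = (Mpow * D j).trace := by rw [mix a]
    calc ∑ t : Fin n → θ, (∏ k, τ g (t k)) * ((tensorPow W t a * D j).trace).re
        = (∑ t : Fin n → θ, ((∏ k, τ g (t k) : ℝ) : ℂ) * (tensorPow W t a * D j).trace).re := by
          rw [Complex.re_sum]
          exact Finset.sum_congr rfl fun t _ => by
            rw [Complex.mul_re, Complex.ofReal_re, Complex.ofReal_im]; ring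
      _ = ((Mpow * D j).trace).re := by rw [h1]
  -- sum over j of the averaged success probabilities is 1
  have sumj : ∑ j, ((Mpow * D j).trace).re = 1 := by
    have : ∑ j, (Mpow * D j).trace = 1 := by
      rw [← Matrix.trace_sum]
      have : ∑ j, Mpow * D j = Mpow := by
        rw [← Matrix.mul_sum, hDsum, Matrix.mul_one]
      rw [this, trMpow]
    calc ∑ j, ((Mpow * D j).trace).re = (∑ j, (Mpow * D j).trace).re := (Complex.re_sum _ _).symm
      _ = 1 := by rw [this]; simp
  -- first part
  have part1 : ∑ t : Fin n → θ, (∏ k, τ g (t k)) *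
      ((1 / (J : ℝ)) * ∑ j, ∑ a : Fin n → A,
        E j a * ((tensorPow W t a * D j).trace).re) = 1 / (J : ℝ) := by
    have swap : ∑ t : Fin n → θ, (∏ k, τ g (t k)) *
        (∑ j, ∑ a : Fin n → A, E j a * ((tensorPow W t a * D j).trace).re) = 1 := by
      calc ∑ t : Fin n → θ, (∏ k, τ g (t k)) *
            (∑ j, ∑ a : Fin n → A, E j a * ((tensorPow W t a * D j).trace).re)
          = ∑ j, ∑ a : Fin n → A, E j a *
              ∑ t : Fin n → θ, (∏ k, τ g (t k)) * ((tensorPow W t a * D j).trace).re := by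
            simp only [Finset.mul_sum, Finset.sum_mul]
            rw [Finset.sum_comm]
            refine Finset.sum_congr rfl fun j _ => ?_
            rw [Finset.sum_comm]
            refine Finset.sum_congr rfl fun a _ => Finset.sum_congr rfl fun t _ => by ring
        _ = ∑ j, ∑ a : Fin n → A, E j a * ((Mpow * D j).trace).re := by
            refine Finset.sum_congr rfl fun j _ => Finset.sum_congr rfl fun a _ => by
              rw [key a j]
        _ = ∑ j, ((Mpow * D j).trace).re := by
            refine Finset.sum_congr rfl fun j _ => ?_
            rw [← Finset.sum_mul, hE1 j, one_mul]
        _ = 1 := sumj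
    calc ∑ t : Fin n → θ, (∏ k, τ g (t k)) *
          ((1 / (J : ℝ)) * ∑ j, ∑ a : Fin n → A,
            E j a * ((tensorPow W t a * D j).trace).re)
        = (1 / (J : ℝ)) * ∑ t : Fin n → θ, (∏ k, τ g (t k)) *
            (∑ j, ∑ a : Fin n → A, E j a * ((tensorPow W t a * D j).trace).re) := by
          rw [Finset.mul_sum]
          exact Finset.sum_congr rfl fun t _ => by ring
      _ = 1 / (J : ℝ) := by rw [swap, mul_one]
  refine ⟨part1, ?_⟩
  -- second part: pick the minimizer
  set φ : (Fin n → θ) → ℝ := fun t => (1 / (J : ℝ)) * ∑ j, ∑ a : Fin n → A,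
      E j a * ((tensorPow W t a * D j).trace).re with hφ
  obtain ⟨t₀, -, ht₀⟩ := Finset.exists_min_image Finset.univ φ
    (Finset.univ_nonempty (α := Fin n → θ))
  refine ⟨t₀, ?_⟩
  have hw : ∀ t : Fin n → θ, 0 ≤ ∏ k, τ g (t k) :=
    fun t => Finset.prod_nonneg fun k _ => hτnn g (t k)
  have hwsum : ∑ t : Fin n → θ, ∏ k, τ g (t k) = 1 := by
    rw [← Fintype.prod_sum fun (k : Fin n) s => τ g s]
    simp [hτ1]
  have hle : φ t₀ ≤ 1 / (J : ℝ) := by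
    calc φ t₀ = (∑ t : Fin n → θ, ∏ k, τ g (t k)) * φ t₀ := by rw [hwsum, one_mul]
      _ = ∑ t : Fin n → θ, (∏ k, τ g (t k)) * φ t₀ := Finset.sum_mul _ _ _
      _ ≤ ∑ t : Fin n → θ, (∏ k, τ g (t k)) * φ t :=
          Finset.sum_le_sum fun t _ =>
            mul_le_mul_of_nonneg_left (ht₀ t (Finset.mem_univ t)) (hw t)
      _ = 1 / (J : ℝ) := part1
  simp only [hφ] at hle
  linarith
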